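/- arXiv:nlin/0003020 — 2 statements merged into one kernel-verified Lean document; each statement's English description precedes it below -/
import Mathlib

section
/- H(λ) := H_2λ^2 + H_1λ + H_0 is a Casimir of the Poisson pencil P_λ := P_1 - λP_0, i.e., (P_1 - λP_0)·dH(λ) = 0 identically in (u_0,...,u_4) and λ. -/
noncomputable section

/-- Partial derivative of `H : ℝ⁵ → ℝ` at `u` in the `i`-th coordinate direction. -/
noncomputable def pd (H : (Fin 5 → ℝ) → ℝ) (u : Fin 5 → ℝ) (i : Fin 5) : ℝ :=
  fderiv ℝ H u (Pi.single i 1)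

/-- The Hamiltonian `H₀` of the stationary KdV₅ system. -/
def H0 (u : Fin 5 → ℝ) : ℝ :=
  (1/16) * (-2*u 2*u 4 + 6*(u 0)^2*u 4 + (u 3)^2 - 12*u 0*u 1*u 3
    + 16*u 0*(u 2)^2 + 12*(u 1)^2*u 2 - 60*(u 0)^3*u 2 + 36*(u 0)^5)

/-- The Hamiltonian `H₁` of the stationary KdV₅ system. -/
def H1 (u : Fin 5 → ℝ) : ℝ :=
  -(1/4) * (2*u 0*u 4 - 2*u 1*u 3 + (u 2)^2 - 20*(u 0)^2*u 2 + 15*(u 0)^4)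

/-- The Hamiltonian `H₂` of the stationary KdV₅ system. -/
def H2 (u : Fin 5 → ℝ) : ℝ :=
  u 4 - 10*u 0*u 2 - 5*(u 1)^2 + 10*(u 0)^3

/-- The first vector field `X₁` of the stationary KdV₅ system. -/
def X1 (u : Fin 5 → ℝ) : Fin 5 → ℝ :=
  ![u 1, u 2, u 3, u 4, 10*u 0*u 3 + 20*u 1*u 2 - 30*(u 0)^2*u 1]

/-- The third vector field `X₃` of the stationary KdV₅ system. -/
def X3 (u : Fin 5 → ℝ) : Fin 5 → ℝ :=
  ![(1/4)*(u 3 - 6*u 0*u 1),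
    (1/4)*(u 4 - 6*u 0*u 2 - 6*(u 1)^2),
    (1/4)*(4*u 0*u 3 + 2*u 1*u 2 - 30*(u 0)^2*u 1),
    (1/4)*(4*u 0*u 4 + 6*u 1*u 3 + 2*(u 2)^2 - 30*(u 0)^2*u 2 - 60*u 0*(u 1)^2),
    (1/4)*(10*u 1*u 4 + 10*(u 0)^2*u 3 + 10*u 2*u 3 - 100*u 0*u 1*u 2
      - 60*(u 1)^3 - 120*(u 0)^3*u 1)]

/-- The first Poisson tensor `P₀` of the stationary KdV₅ system. -/
def P0 (u : Fin 5 → ℝ) : Matrix (Fin 5) (Fin 5) ℝ :=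
  !![0, 0, 0, 2, 0;
     0, 0, -2, 0, -20*u 0;
     0, 2, 0, 20*u 0, 20*u 1;
     -2, 0, -20*u 0, 0, -140*(u 0)^2 - 20*u 2;
     0, 20*u 0, -20*u 1, 140*(u 0)^2 + 20*u 2, 0]

/-- The second Poisson tensor `P₁` of the stationary KdV₅ system. -/
def P1 (u : Fin 5 → ℝ) : Matrix (Fin 5) (Fin 5) ℝ :=
  !![0, 1/2, 0, 3*u 0, 6*u 1;
     -(1/2), 0, -3*u 0, -3*u 1, -4*u 2 - 15*(u 0)^2;
     0, 3*u 0, 0, u 2 + 15*(u 0)^2, u 3 + 30*u 0*u 1;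
     -3*u 0, 3*u 1, -(u 2 + 15*(u 0)^2), 0, u 4 - 40*u 0*u 2 + 30*(u 1)^2 - 60*(u 0)^3;
     -6*u 1, 4*u 2 + 15*(u 0)^2, -(u 3 + 30*u 0*u 1),
       -(u 4 - 40*u 0*u 2 + 30*(u 1)^2 - 60*(u 0)^3), 0]

/-- One term of the cyclic Jacobi expression: `∑ₗ P_{il} ∂Q_{jk}/∂u_l`. -/
noncomputable def jacTerm (P Q : (Fin 5 → ℝ) → Matrix (Fin 5) (Fin 5) ℝ)
    (u : Fin 5 → ℝ) (i j k : Fin 5) : ℝ :=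
  ∑ l, P u i l * pd (fun v => Q v j k) u l

/-!
The gradients of `H₀, H₁, H₂` form a Lenard–Magri chain for the pair `(P₀, P₁)`:
`P₁ dH₀ = 0`, `P₁ dH₁ = P₀ dH₀`, `P₁ dH₂ = P₀ dH₁`, `P₀ dH₂ = 0`. Expanding
`(P₁ - λP₀)(λ² dH₂ + λ dH₁ + dH₀)` in powers of `λ`, every coefficient is one of these relations.
-/

open Matrix

theorem Matrix.pencil_mulVec_eq_zero_of_lenard_chain {n R : Type*} [Fintype n] [CommRing R]
    {A B : Matrix n n R} {v₀ v₁ v₂ : n → R} (h₀ : B *ᵥ v₀ = 0) (h₁ : B *ᵥ v₁ = A *ᵥ v₀)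
    (h₂ : B *ᵥ v₂ = A *ᵥ v₁) (h₃ : A *ᵥ v₂ = 0) (c : R) :
    (B - c • A) *ᵥ (c ^ 2 • v₂ + c • v₁ + v₀) = 0 := by
  simp only [sub_mulVec, mulVec_add, mulVec_smul, smul_mulVec, h₀, h₁, h₂, h₃]
  module

theorem pd_add {f g : (Fin 5 → ℝ) → ℝ} {u : Fin 5 → ℝ} (hf : DifferentiableAt ℝ f u)
    (hg : DifferentiableAt ℝ g u) : pd (fun v => f v + g v) u = pd f u + pd g u := by
  ext i
  simp [pd, fderiv_fun_add hf hg]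

theorem pd_mul_const (f : (Fin 5 → ℝ) → ℝ) (u : Fin 5 → ℝ) (c : ℝ) :
    pd (fun v => f v * c) u = c • pd f u := by
  have h : (fun v => f v * c) = c • f := funext fun v => mul_comm _ _
  ext i
  simp [pd, h, fderiv_const_smul_field]

@[fun_prop]
theorem differentiable_H0 : Differentiable ℝ H0 := by unfold H0; fun_prop

@[fun_prop]
theorem differentiable_H1 : Differentiable ℝ H1 := by unfold H1; fun_prop

@[fun_prop]
theorem differentiable_H2 : Differentiable ℝ H2 := by unfold H2; fun_prop

theorem pd_H0 (u : Fin 5 → ℝ) :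
    pd H0 u = ![(3/4)*u 0*u 4 - (3/4)*u 1*u 3 + (u 2)^2 - (45/4)*(u 0)^2*u 2 + (45/4)*(u 0)^4,
      -(3/4)*u 0*u 3 + (3/2)*u 1*u 2,
      -(1/8)*u 4 + 2*u 0*u 2 + (3/4)*(u 1)^2 - (15/4)*(u 0)^3,
      (1/8)*u 3 - (3/4)*u 0*u 1,
      -(1/8)*u 2 + (3/8)*(u 0)^2] := by
  ext i
  unfold pd H0
  fin_cases i <;>
    simp (disch := fun_prop) [fderiv_fun_add, fderiv_fun_sub, fderiv_fun_mul, fderiv_fun_pow,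
      fderiv_apply, Pi.single_apply] <;> ring

theorem pd_H1 (u : Fin 5 → ℝ) :
    pd H1 u = ![-(1/2)*u 4 + 10*u 0*u 2 - 15*(u 0)^3, (1/2)*u 3, -(1/2)*u 2 + 5*(u 0)^2,
      (1/2)*u 1, -(1/2)*u 0] := by
  ext i
  unfold pd H1
  fin_cases i <;>
    simp (disch := fun_prop) [fderiv_fun_add, fderiv_fun_sub, fderiv_fun_mul, fderiv_fun_pow,
      fderiv_apply, Pi.single_apply] <;> ring

theorem pd_H2 (u : Fin 5 → ℝ) : pd H2 u = ![30*(u 0)^2 - 10*u 2, -10*u 1, -10*u 0, 0, 1] := by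
  ext i
  unfold pd H2
  fin_cases i <;>
    simp (disch := fun_prop) [fderiv_fun_add, fderiv_fun_sub, fderiv_fun_mul, fderiv_fun_pow,
      fderiv_apply, Pi.single_apply] <;> ring

theorem P1_mulVec_pd_H0 (u : Fin 5 → ℝ) : P1 u *ᵥ pd H0 u = 0 := by
  ext i
  fin_cases i <;> simp [pd_H0, P1, mulVec, dotProduct, Fin.sum_univ_five] <;> ring

theorem P1_mulVec_pd_H1 (u : Fin 5 → ℝ) : P1 u *ᵥ pd H1 u = P0 u *ᵥ pd H0 u := by
  ext i
  fin_cases i <;> simp [pd_H0, pd_H1, P0, P1, mulVec, dotProduct, Fin.sum_univ_five] <;> ring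

theorem P1_mulVec_pd_H2 (u : Fin 5 → ℝ) : P1 u *ᵥ pd H2 u = P0 u *ᵥ pd H1 u := by
  ext i
  fin_cases i <;> simp [pd_H1, pd_H2, P0, P1, mulVec, dotProduct, Fin.sum_univ_five] <;> ring

theorem P0_mulVec_pd_H2 (u : Fin 5 → ℝ) : P0 u *ᵥ pd H2 u = 0 := by
  ext i
  fin_cases i <;> simp [pd_H2, P0, mulVec, dotProduct, Fin.sum_univ_five] <;> ring

/-- `H(λ) = H₂λ² + H₁λ + H₀` is a Casimir of the Poisson pencil `P₁ - λP₀`. -/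
theorem stmt10 :
    ∀ u : Fin 5 → ℝ, ∀ lam : ℝ, ∀ i : Fin 5,
      ∑ j, (P1 u i j - lam * P0 u i j) *
        pd (fun v => H2 v * lam^2 + H1 v * lam + H0 v) u j = 0 := by
  intro u lam i
  have hpd : pd (fun v => H2 v * lam^2 + H1 v * lam + H0 v) u =
      lam ^ 2 • pd H2 u + lam • pd H1 u + pd H0 u := by
    rw [pd_add (by fun_prop) (by fun_prop),
      pd_add (by fun_prop) (by fun_prop), pd_mul_const, pd_mul_const]
  have hcasimir := congrFun (pencil_mulVec_eq_zero_of_lenard_chain (P1_mulVec_pd_H0 u)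
    (P1_mulVec_pd_H1 u) (P1_mulVec_pd_H2 u) (P0_mulVec_pd_H2 u) lam) i
  rw [← hpd] at hcasimir
  simpa [mulVec, dotProduct] using hcasimir
end
end

section
/- The vector field X_1 of KdV_5 admits the Lax representation dL/dt_1 = [V^(1), L], where L is the 2x2 matrix polynomial L(λ) = (1/16) times the matrix with entries L_{11} = 4u_1λ + u_3 - 6u_0u_1, L_{12} = 16λ^2 - 8u_0λ + 6u_0^2 - 2u_2, L_{21} = 16λ^3 + 8u_0λ^2 + 2λ(u_2 - u_0^2) + u_4 - 8u_0u_2 - 6u_1^2 + 6u_0^3, L_{22} = -L_{11}, and V^(1) = [[0, 1], [λ + u_0, 0]]; here dL/dt_1 means differentiating each entry of L along the vector field X_1, and the identity holds for all λ. -/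
noncomputable section

/-- The Lax matrix `L(λ)` of the stationary KdV₅ system. -/
def Lmat (u : Fin 5 → ℝ) (lam : ℝ) : Matrix (Fin 2) (Fin 2) ℝ :=
  (1/16 : ℝ) •
    !![4*u 1*lam + u 3 - 6*u 0*u 1,
       16*lam^2 - 8*u 0*lam + 6*(u 0)^2 - 2*u 2;
       16*lam^3 + 8*u 0*lam^2 + 2*lam*(u 2 - (u 0)^2) + u 4 - 8*u 0*u 2 - 6*(u 1)^2 + 6*(u 0)^3,
       -(4*u 1*lam + u 3 - 6*u 0*u 1)]

/-- The matrix `V⁽¹⁾(λ)` of the KdV₅ Lax pair. -/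
def V1mat (u : Fin 5 → ℝ) (lam : ℝ) : Matrix (Fin 2) (Fin 2) ℝ :=
  !![0, 1; lam + u 0, 0]

/-! The left-hand side is the derivative of the entry `L_ij` in the direction `X₁(u)`, i.e. a line
derivative of a polynomial, which is computed symbolically. What remains is the Lax identity
`dL(u)[X₁(u)] = [V⁽¹⁾, L]`, an identity between polynomials in `λ` and `u`. -/

theorem sum_mul_pd_eq_fderiv (H : (Fin 5 → ℝ) → ℝ) (u w : Fin 5 → ℝ) :
    ∑ k, w k * pd H u k = fderiv ℝ H u w := by
  conv_rhs => rw [pi_eq_sum_univ' w, map_sum]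
  simp only [map_smul, smul_eq_mul, pd]

theorem differentiable_Lmat_apply (lam : ℝ) (i j : Fin 2) :
    Differentiable ℝ (fun v => Lmat v lam i j) := by
  fin_cases i <;> fin_cases j <;> simp [Lmat] <;> fun_prop

def dLmat (u w : Fin 5 → ℝ) (lam : ℝ) : Matrix (Fin 2) (Fin 2) ℝ :=
  (1/16 : ℝ) •
    !![4*w 1*lam + w 3 - 6*(w 0*u 1 + u 0*w 1),
       -8*w 0*lam + 12*u 0*w 0 - 2*w 2;
       8*w 0*lam^2 + 2*lam*(w 2 - 2*u 0*w 0) + w 4 - 8*(w 0*u 2 + u 0*w 2) - 12*u 1*w 1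
         + 18*(u 0)^2*w 0,
       -(4*w 1*lam + w 3 - 6*(w 0*u 1 + u 0*w 1))]

theorem lineDeriv_Lmat_apply (u w : Fin 5 → ℝ) (lam : ℝ) (i j : Fin 2) :
    lineDeriv ℝ (fun v => Lmat v lam i j) u w = dLmat u w lam i j := by
  fin_cases i <;> fin_cases j <;>
    simp (disch := fun_prop) [lineDeriv, Lmat, dLmat, deriv_fun_add, deriv_fun_sub,
      deriv_fun_mul, deriv_fun_pow] <;> ring

theorem dLmat_X1 (u : Fin 5 → ℝ) (lam : ℝ) :
    dLmat u (X1 u) lam = V1mat u lam * Lmat u lam - Lmat u lam * V1mat u lam := by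
  ext i j
  fin_cases i <;> fin_cases j <;> simp [dLmat, X1, V1mat, Lmat] <;> ring

/-- `X₁` admits the Lax representation `dL/dt₁ = [V⁽¹⁾, L]`. -/
theorem stmt12 :
    ∀ u : Fin 5 → ℝ, ∀ lam : ℝ, ∀ i j : Fin 2,
      ∑ k, X1 u k * pd (fun v => Lmat v lam i j) u k
        = (V1mat u lam * Lmat u lam - Lmat u lam * V1mat u lam) i j := by
  intro u lam i j
  rw [sum_mul_pd_eq_fderiv, ← (differentiable_Lmat_apply lam i j u).lineDeriv_eq_fderiv,
    lineDeriv_Lmat_apply, dLmat_X1]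

end
end
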